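/- Let T : L²(Ω) → L²(Ω) be bounded linear and g ∈ L²(Ω), and suppose there exists a constant c > 0 such that ‖T*(Tu − g)‖_{L²(Ω)} = c·‖Tu − g‖_{L²(Ω)} for all u ∈ L²(Ω), where T* is the adjoint of T. If 0 < α ≤ β and u_α, u_β minimize J₂(·,α) and J₂(·,β) respectively over {u ∈ L²(Ω) : TV(u) < ∞}, then √(H₂(u_β;g))/β ≤ √(H₂(u_α;g))/α; i.e., the function α ↦ √(H₂(u_α;g))/α is non-increasing. -/

import Mathlib

open MeasureTheory Filter
open scoped ENNReal NNReal

noncomputable section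

abbrev E2 : Type := EuclideanSpace ℝ (Fin 2)

abbrev μΩ (Ω : Set E2) : Measure E2 := MeasureTheory.volume.restrict Ω

abbrev LpΩ (Ω : Set E2) := Lp ℝ 2 (μΩ Ω)

/-- Discrete divergence of a C¹ vector field. -/
def divg (ξ : E2 → E2) (x : E2) : ℝ :=
  ∑ i : Fin 2, fderiv ℝ ξ x (EuclideanSpace.single i 1) i

/-- Admissible test vector fields for the total variation. -/
def IsTestField (Ω : Set E2) (ξ : E2 → E2) : Prop :=
  ContDiff ℝ 1 ξ ∧ HasCompactSupport ξ ∧ tsupport ξ ⊆ Ω ∧ ∀ x, ‖ξ x‖ ≤ 1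

/-- Total variation of `u ∈ L²(Ω)` (valued in `ℝ≥0∞`). -/
def TV (Ω : Set E2) (u : LpΩ Ω) : ℝ≥0∞ :=
  ⨆ ξ : {ξ : E2 → E2 // IsTestField Ω ξ},
    ENNReal.ofReal (∫ x, u x * divg ξ.1 x ∂(μΩ Ω))

/-- Fidelity term `H_τ(u;g) = (1/τ)‖Tu - g‖_{L^τ}^τ`. -/
def Hfid (Ω : Set E2) (τ : ℕ) (T : LpΩ Ω →L[ℝ] LpΩ Ω) (g u : LpΩ Ω) : ℝ :=
  (1 / (τ : ℝ)) * ∫ x, |(T u - g : LpΩ Ω) x| ^ τ ∂(μΩ Ω)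

/-- The functional `J_τ(u,α) = H_τ(u;g) + α · TV(u)` (valued in `ℝ≥0∞`). -/
def Jfun (Ω : Set E2) (τ : ℕ) (T : LpΩ Ω →L[ℝ] LpΩ Ω) (g : LpΩ Ω) (α : ℝ)
    (u : LpΩ Ω) : ℝ≥0∞ :=
  ENNReal.ofReal (Hfid Ω τ T g u) + ENNReal.ofReal α * TV Ω u

/-- The mean value `g_Ω` of `g` over `Ω`. -/
def meanG (Ω : Set E2) (g : LpΩ Ω) : ℝ :=
  (∫ x, g x ∂(μΩ Ω)) / (MeasureTheory.volume Ω).toReal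

/-- `‖g - g_Ω‖_{L^τ(Ω)}^τ`. -/
def gMeanDist (Ω : Set E2) (τ : ℕ) (g : LpΩ Ω) : ℝ :=
  ∫ x, |g x - meanG Ω g| ^ τ ∂(μΩ Ω)

/-- `B_τ = (ν_τ/τ)|Ω|`. -/
def Bval (Ω : Set E2) (τ : ℕ) (ν : ℝ) : ℝ :=
  (ν / (τ : ℝ)) * (MeasureTheory.volume Ω).toReal

/-- `o` represents the constant function `1_Ω` in `L²(Ω)`. -/
def IsOneFun (Ω : Set E2) (o : LpΩ Ω) : Prop :=
  ∀ᵐ x ∂(μΩ Ω), o x = 1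

/-- `u` minimizes `J_τ(·,α)` over `{TV < ∞}`. -/
def IsJMin (Ω : Set E2) (τ : ℕ) (T : LpΩ Ω →L[ℝ] LpΩ Ω) (g : LpΩ Ω) (α : ℝ)
    (u : LpΩ Ω) : Prop :=
  TV Ω u < ⊤ ∧ ∀ v, TV Ω v < ⊤ → Jfun Ω τ T g α u ≤ Jfun Ω τ T g α v

/-!
A minimiser `u` of `½‖Tv - g‖² + α R v` over a convex set on which `R` is convex satisfies the
first-order condition `α (R u - R w) ≤ ⟪Tu - g, T (w - u)⟫` (compare with `u + t (w - u)` and let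
`t → 0⁺`). Writing it for `(u_α, u_β)` and `(u_β, u_α)`, multiplying by `β` and `α` and adding
cancels `R`; with Cauchy–Schwarz this leaves `(a - b) (β a - α b) ≤ 0` for the residual norms
`a = ‖Tu_α - g‖`, `b = ‖Tu_β - g‖`, which together with `α ≤ β` forces `b / β ≤ a / α`.
The total variation is convex on `{TV < ∞}`, and `√H₂ = ‖Tu - g‖ / √2`.
-/
open scoped RealInnerProductSpace

section Tikhonov

variable {E F : Type*} [AddCommGroup E] [Module ℝ E]
  [NormedAddCommGroup F] [InnerProductSpace ℝ F]

lemma inner_add_nonneg_of_forall_le {r d : F} {C : ℝ}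
    (h : ∀ t ∈ Set.Ioc (0 : ℝ) 1, ‖r‖ ^ 2 / 2 ≤ ‖r + t • d‖ ^ 2 / 2 + t * C) :
    0 ≤ ⟪r, d⟫ + C := by
  have hquot : ∀ t ∈ Set.Ioc (0 : ℝ) 1, 0 ≤ ⟪r, d⟫ + C + t * (‖d‖ ^ 2 / 2) := by
    intro t ht
    have h' := h t ht
    rw [norm_add_sq_real, inner_smul_right, norm_smul, mul_pow, Real.norm_eq_abs, sq_abs] at h'
    exact (mul_nonneg_iff_of_pos_left ht.1).mp (by linarith)
  have hlim : Tendsto (fun t : ℝ => ⟪r, d⟫ + C + t * (‖d‖ ^ 2 / 2)) (nhdsWithin 0 (Set.Ioi 0))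
      (nhds (⟪r, d⟫ + C)) :=
    ((continuous_const.add (continuous_id.mul continuous_const)).tendsto' 0 _
      (by simp)).mono_left nhdsWithin_le_nhds
  exact ge_of_tendsto hlim (by filter_upwards [Ioc_mem_nhdsGT one_pos] using hquot)

variable {s : Set E} {R : E → ℝ}

theorem ConvexOn.le_inner_of_isMinOn (hR : ConvexOn ℝ s R) (T : E →ₗ[ℝ] F) (g : F)
    {α : ℝ} (hα : 0 ≤ α) {u w : E} (hu : u ∈ s) (hw : w ∈ s)
    (hmin : IsMinOn (fun v => ‖T v - g‖ ^ 2 / 2 + α * R v) s u) :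
    α * (R u - R w) ≤ ⟪T u - g, T (w - u)⟫ := by
  suffices 0 ≤ ⟪T u - g, T (w - u)⟫ + α * (R w - R u) by linarith
  refine inner_add_nonneg_of_forall_le fun t ht => ?_
  have hconv : R (u + t • (w - u)) ≤ R u + t * (R w - R u) := by
    have hpt : u + t • (w - u) = (1 - t) • u + t • w := by module
    have := hR.2 hu hw (sub_nonneg.2 ht.2) ht.1.le (by ring)
    rw [hpt]
    simp only [smul_eq_mul] at this
    linarith
  have hJ := isMinOn_iff.mp hmin _ (hR.1.add_smul_sub_mem hu hw ⟨ht.1.le, ht.2⟩)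
  rw [map_add, map_smul, add_sub_right_comm] at hJ
  nlinarith [mul_le_mul_of_nonneg_left hconv hα]

theorem ConvexOn.norm_sub_div_le_of_isMinOn (hR : ConvexOn ℝ s R) (T : E →ₗ[ℝ] F)
    (g : F) {α β : ℝ} (hα : 0 < α) (hαβ : α ≤ β) {uα uβ : E} (huα : uα ∈ s) (huβ : uβ ∈ s)
    (hminα : IsMinOn (fun v => ‖T v - g‖ ^ 2 / 2 + α * R v) s uα)
    (hminβ : IsMinOn (fun v => ‖T v - g‖ ^ 2 / 2 + β * R v) s uβ) :
    ‖T uβ - g‖ / β ≤ ‖T uα - g‖ / α := by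
  have hβ : 0 < β := hα.trans_le hαβ
  have h₁ := hR.le_inner_of_isMinOn T g hα.le huα huβ hminα
  have h₂ := hR.le_inner_of_isMinOn T g hβ.le huβ huα hminβ
  have hdiff : ∀ v w : E, T (v - w) = (T v - g) - (T w - g) := fun v w => by
    rw [map_sub]; abel
  rw [hdiff, inner_sub_right, real_inner_self_eq_norm_sq] at h₁ h₂
  rw [real_inner_comm] at h₂
  set a := ‖T uα - g‖
  set b := ‖T uβ - g‖
  have hCS : ⟪T uα - g, T uβ - g⟫ ≤ a * b := real_inner_le_norm _ _
  have hsum : (a - b) * (β * a - α * b) ≤ 0 := by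
    nlinarith [mul_le_mul_of_nonneg_left h₁ hβ.le, mul_le_mul_of_nonneg_left h₂ hα.le]
  rw [div_le_div_iff₀ hβ hα]
  have ha : 0 ≤ a := norm_nonneg _
  rcases lt_or_ge a b with hlt | hba
  · nlinarith [nonneg_of_mul_nonpos_right hsum (sub_neg.2 hlt)]
  · nlinarith [mul_le_mul_of_nonneg_left hαβ ha]

end Tikhonov

section TotalVariation

variable {Ω : Set E2}

lemma IsTestField.continuous_divg {ξ : E2 → E2} (hξ : IsTestField Ω ξ) :
    Continuous (divg ξ) :=
  continuous_finsetSum _ fun i _ => (EuclideanSpace.proj i).continuous.comp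
    ((hξ.1.continuous_fderiv one_ne_zero).clm_apply continuous_const)

lemma IsTestField.hasCompactSupport_divg {ξ : E2 → E2} (hξ : IsTestField Ω ξ) :
    HasCompactSupport (divg ξ) :=
  hξ.2.1.fderiv (𝕜 := ℝ) |>.mono fun x hx => by
    simp only [Function.mem_support] at hx ⊢
    intro h; apply hx; simp [divg, h]

lemma IsTestField.integrable_mul_divg {ξ : E2 → E2} (hξ : IsTestField Ω ξ) (u : LpΩ Ω) :
    Integrable (fun x => u x * divg ξ x) (μΩ Ω) :=
  (Lp.memLp u).integrable_mul (q := 2)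
    (hξ.continuous_divg.memLp_of_hasCompactSupport hξ.hasCompactSupport_divg)

lemma TV_smul_add_smul_le {a b : ℝ} (ha : 0 ≤ a) (hb : 0 ≤ b) (u w : LpΩ Ω) :
    TV Ω (a • u + b • w) ≤ ENNReal.ofReal a * TV Ω u + ENNReal.ofReal b * TV Ω w := by
  refine iSup_le fun ξ => ?_
  have hu := ξ.2.integrable_mul_divg u
  have hw := ξ.2.integrable_mul_divg w
  have hae : (fun x => (a • u + b • w : LpΩ Ω) x * divg ξ.1 x)
      =ᵐ[μΩ Ω] fun x => a * (u x * divg ξ.1 x) + b * (w x * divg ξ.1 x) := by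
    filter_upwards [Lp.coeFn_add (a • u) (b • w), Lp.coeFn_smul a u, Lp.coeFn_smul b w]
      with x h₁ h₂ h₃
    simp only [Pi.add_apply, Pi.smul_apply, smul_eq_mul] at h₁ h₂ h₃
    rw [h₁, h₂, h₃]; ring
  rw [integral_congr_ae hae, integral_add (hu.const_mul a) (hw.const_mul b),
    integral_const_mul, integral_const_mul]
  refine ENNReal.ofReal_add_le.trans (add_le_add ?_ ?_)
  · rw [ENNReal.ofReal_mul ha]
    exact mul_le_mul_right (le_iSup (fun ξ : {ξ // IsTestField Ω ξ} =>
      ENNReal.ofReal (∫ x, u x * divg ξ.1 x ∂(μΩ Ω))) ξ) _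
  · rw [ENNReal.ofReal_mul hb]
    exact mul_le_mul_right (le_iSup (fun ξ : {ξ // IsTestField Ω ξ} =>
      ENNReal.ofReal (∫ x, w x * divg ξ.1 x ∂(μΩ Ω))) ξ) _

lemma convexOn_toReal_TV :
    ConvexOn ℝ {u : LpΩ Ω | TV Ω u < ⊤} fun u => (TV Ω u).toReal := by
  have hfin : ∀ {u w : LpΩ Ω}, TV Ω u < ⊤ → TV Ω w < ⊤ → ∀ a b : ℝ,
      ENNReal.ofReal a * TV Ω u + ENNReal.ofReal b * TV Ω w < ⊤ := fun hu hw _ _ =>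
    ENNReal.add_lt_top.2 ⟨ENNReal.mul_lt_top ENNReal.ofReal_lt_top hu,
      ENNReal.mul_lt_top ENNReal.ofReal_lt_top hw⟩
  refine ⟨fun u hu w hw a b ha hb _ => (TV_smul_add_smul_le ha hb u w).trans_lt
    (hfin hu hw a b), fun u hu w hw a b ha hb _ => ?_⟩
  have h := ENNReal.toReal_mono (hfin hu hw a b).ne (TV_smul_add_smul_le ha hb u w)
  rwa [ENNReal.toReal_add (ENNReal.mul_lt_top ENNReal.ofReal_lt_top hu).ne
    (ENNReal.mul_lt_top ENNReal.ofReal_lt_top hw).ne, ENNReal.toReal_mul, ENNReal.toReal_mul,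
    ENNReal.toReal_ofReal ha, ENNReal.toReal_ofReal hb] at h

end TotalVariation

section Fidelity

variable {Ω : Set E2} {T : LpΩ Ω →L[ℝ] LpΩ Ω} {g : LpΩ Ω}

lemma Hfid_two_eq (u : LpΩ Ω) : Hfid Ω 2 T g u = ‖T u - g‖ ^ 2 / 2 := by
  have h : ∫ x, |(T u - g : LpΩ Ω) x| ^ 2 ∂(μΩ Ω) = ⟪T u - g, T u - g⟫ := by
    simp only [MeasureTheory.L2.inner_def, pow_two, abs_mul_abs_self, RCLike.inner_apply,
      conj_trivial]
  rw [Hfid, h, real_inner_self_eq_norm_sq]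
  ring

lemma Jfun_two_eq_ofReal {α : ℝ} (hα : 0 ≤ α) {u : LpΩ Ω} (hu : TV Ω u < ⊤) :
    Jfun Ω 2 T g α u = ENNReal.ofReal (‖T u - g‖ ^ 2 / 2 + α * (TV Ω u).toReal) := by
  rw [Jfun, Hfid_two_eq, ENNReal.ofReal_add (by positivity) (by positivity),
    ENNReal.ofReal_mul hα, ENNReal.ofReal_toReal hu.ne]

lemma IsJMin.isMinOn {α : ℝ} (hα : 0 ≤ α) {u : LpΩ Ω} (hu : IsJMin Ω 2 T g α u) :
    IsMinOn (fun v => ‖T v - g‖ ^ 2 / 2 + α * (TV Ω v).toReal) {v | TV Ω v < ⊤} u := by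
  refine isMinOn_iff.2 fun v hv => ?_
  have h := hu.2 v hv
  rwa [Jfun_two_eq_ofReal hα hu.1, Jfun_two_eq_ofReal hα hv,
    ENNReal.ofReal_le_ofReal_iff (by positivity)] at h

lemma sqrt_Hfid_two (u : LpΩ Ω) : Real.sqrt (Hfid Ω 2 T g u) = ‖T u - g‖ / Real.sqrt 2 := by
  rw [Hfid_two_eq, Real.sqrt_div' _ zero_le_two, Real.sqrt_sq (norm_nonneg _)]

end Fidelity

theorem stmt10_general (Ω : Set E2)
    (T : LpΩ Ω →L[ℝ] LpΩ Ω) (g : LpΩ Ω)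
    (α β : ℝ) (hα : 0 < α) (hαβ : α ≤ β)
    (uα uβ : LpΩ Ω)
    (huα : IsJMin Ω 2 T g α uα) (huβ : IsJMin Ω 2 T g β uβ) :
    Real.sqrt (Hfid Ω 2 T g uβ) / β ≤ Real.sqrt (Hfid Ω 2 T g uα) / α := by
  have hresidual : ‖T uβ - g‖ / β ≤ ‖T uα - g‖ / α :=
    convexOn_toReal_TV.norm_sub_div_le_of_isMinOn (T : LpΩ Ω →ₗ[ℝ] LpΩ Ω) g hα hαβ
      huα.1 huβ.1 (huα.isMinOn hα.le) (huβ.isMinOn (hα.le.trans hαβ))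
  rw [sqrt_Hfid_two, sqrt_Hfid_two, div_right_comm, div_right_comm ‖T uα - g‖]
  exact div_le_div_of_nonneg_right hresidual (Real.sqrt_nonneg 2)

/-- If `‖T*(Tu-g)‖ = c‖Tu-g‖` for all `u`, then
`α ↦ √(H₂(u_α;g))/α` is non-increasing along minimizers of `J₂(·,α)`. -/
theorem stmt10 (Ω : Set E2) (hΩo : IsOpen Ω) (hΩb : Bornology.IsBounded Ω)
    (hΩpos : 0 < MeasureTheory.volume Ω)
    (T : LpΩ Ω →L[ℝ] LpΩ Ω) (g : LpΩ Ω)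
    (c : ℝ) (hc : 0 < c)
    (hadj : ∀ u : LpΩ Ω, ‖ContinuousLinearMap.adjoint T (T u - g)‖ = c * ‖T u - g‖)
    (α β : ℝ) (hα : 0 < α) (hαβ : α ≤ β)
    (uα uβ : LpΩ Ω)
    (huα : IsJMin Ω 2 T g α uα) (huβ : IsJMin Ω 2 T g β uβ) :
    Real.sqrt (Hfid Ω 2 T g uβ) / β ≤ Real.sqrt (Hfid Ω 2 T g uα) / α :=
  stmt10_general Ω T g α β hα hαβ uα uβ huα huβ

end
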